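/- In an effect algebra, there is at most one element e with e ≠ 0 and e ≠ 1 such that e ⊕ f is defined for every f ≠ 1. -/
import Mathlib


/-- An effect algebra: a set with `zero`, `one`, a partial commutative associative
sum (modelled as an `Option`-valued operation), unique complements, and
`e ⊕ 1` defined only for `e = 0`. -/
structure EffectAlgebra (E : Type*) where
  zero : E
  one : E
  add : E → E → Option E
  comm : ∀ e f, add e f = add f e
  assoc : ∀ e f g, (add e f).bind (fun s => add s g) = (add f g).bind (fun s => add e s)
  compl : E → E
  add_compl : ∀ e, add e (compl e) = some one
  compl_unique : ∀ e f, add e f = some one → f = compl e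
  one_max : ∀ e f, add e one = some f → e = zero

namespace EffectAlgebra

variable {E : Type*}

/-- Intrinsic order: `e ≤ f` iff `f = e ⊕ g` for some `g`. -/
def le (A : EffectAlgebra E) (e f : E) : Prop := ∃ g, A.add e g = some f

/-- Iterated sum `e ⊕ e ⊕ ⋯ ⊕ e` (`n` copies), when defined. -/
def nsum (A : EffectAlgebra E) (e : E) : ℕ → Option E
  | 0 => some A.zero
  | n + 1 => (nsum A e n).bind (fun s => A.add e s)

end EffectAlgebra

/-- The underlying set `{k/(n-1) : 0 ≤ k ≤ n-1}` of the scale effect algebra `S_n`. -/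
def scaleSet (n : ℕ) : Set ℝ := {x | ∃ k : ℕ, k ≤ n - 1 ∧ x = (k : ℝ) / ((n : ℝ) - 1)}

namespace EffectAlgebra

variable {E : Type*} (A : EffectAlgebra E)

lemma compl_compl (e : E) : A.compl (A.compl e) = e :=
  (A.compl_unique (A.compl e) e (by rw [A.comm]; exact A.add_compl e)).symm

lemma compl_one : A.compl A.one = A.zero :=
  A.one_max _ _ (by rw [A.comm]; exact A.add_compl A.one)

lemma one_add_zero : A.add A.one A.zero = some A.one := by
  rw [← A.compl_one]; exact A.add_compl A.one

lemma zero_add_one : A.add A.zero A.one = some A.one := by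
  rw [A.comm]; exact A.one_add_zero

lemma compl_add_zero (e : E) : A.add (A.compl e) A.zero = some (A.compl e) := by
  have h := A.assoc e (A.compl e) A.zero
  rw [A.add_compl] at h
  simp only [Option.bind_some] at h
  rw [A.one_add_zero] at h
  cases hx : A.add (A.compl e) A.zero with
  | none => rw [hx] at h; simp at h
  | some s =>
    rw [hx] at h
    simp only [Option.bind_some] at h
    rw [A.compl_unique e s h.symm]

lemma add_zero (e : E) : A.add e A.zero = some e := by
  have h := A.compl_add_zero (A.compl e)
  rwa [A.compl_compl] at h

lemma cancel {a u v d : E} (hu : A.add a u = some d) (hv : A.add a v = some d) :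
    u = v := by
  have key : ∀ w : E, A.add a w = some d → ∃ m, A.add a (A.compl d) = some m ∧ w = A.compl m := by
    intro w hw
    have h := A.assoc w a (A.compl d)
    rw [A.comm w a, hw] at h
    simp only [Option.bind_some] at h
    rw [A.add_compl] at h
    cases hm : A.add a (A.compl d) with
    | none => rw [hm] at h; simp at h
    | some m =>
      rw [hm] at h
      simp only [Option.bind_some] at h
      exact ⟨m, rfl, A.compl_unique m w (by rw [A.comm]; exact h.symm)⟩
  obtain ⟨m, hm, hum⟩ := key u hu
  obtain ⟨m', hm', hvm⟩ := key v hv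
  rw [hm] at hm'
  rw [hum, hvm, Option.some_inj.mp hm']

lemma eq_zero_of_add_eq_zero {p q : E} (h : A.add p q = some A.zero) : p = A.zero := by
  have h1 := A.assoc p q A.one
  rw [h] at h1
  simp only [Option.bind_some] at h1
  rw [A.zero_add_one] at h1
  have hq : q = A.zero := by
    cases hy : A.add q A.one with
    | none => rw [hy] at h1; simp at h1
    | some y => exact A.one_max q y hy
  rw [hq] at h
  have := A.add_zero p
  rw [this] at h
  exact Option.some_inj.mp h

/-- A "full row" element is below every nonzero element. -/
lemma le_of_full_row {a b : E}
    (ha : ∀ f, f ≠ A.one → ∃ s, A.add a f = some s) (hb0 : b ≠ A.zero) :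
    ∃ g, A.add a g = some b := by
  have hcb1 : A.compl b ≠ A.one := by
    intro h
    apply hb0
    have hc := A.add_compl b
    rw [h] at hc
    exact A.one_max b A.one hc
  obtain ⟨s, hs⟩ := ha (A.compl b) hcb1
  have h := A.assoc (A.compl b) a (A.compl s)
  rw [A.comm (A.compl b) a, hs] at h
  simp only [Option.bind_some] at h
  rw [A.add_compl] at h
  cases hm : A.add a (A.compl s) with
  | none => rw [hm] at h; simp at h
  | some m =>
    rw [hm] at h
    simp only [Option.bind_some] at h
    have : m = A.compl (A.compl b) := A.compl_unique (A.compl b) m h.symm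
    rw [A.compl_compl] at this
    exact ⟨A.compl s, by rw [hm, this]⟩

end EffectAlgebra

theorem atMostOne_full_row {E : Type*} (A : EffectAlgebra E) (e₁ e₂ : E)
    (h₁ : e₁ ≠ A.zero ∧ e₁ ≠ A.one ∧ ∀ f, f ≠ A.one → ∃ s, A.add e₁ f = some s)
    (h₂ : e₂ ≠ A.zero ∧ e₂ ≠ A.one ∧ ∀ f, f ≠ A.one → ∃ s, A.add e₂ f = some s) :
    e₁ = e₂ := by
  obtain ⟨ha0, -, ha⟩ := h₁
  obtain ⟨hb0, -, hb⟩ := h₂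
  obtain ⟨p, hp⟩ := A.le_of_full_row ha hb0
  obtain ⟨q, hq⟩ := A.le_of_full_row hb ha0
  -- e₁ ⊕ (p ⊕ q) = (e₁ ⊕ p) ⊕ q = e₂ ⊕ q = e₁
  have h := A.assoc e₁ p q
  rw [hp] at h
  simp only [Option.bind_some] at h
  rw [hq] at h
  cases hr : A.add p q with
  | none => rw [hr] at h; simp at h
  | some r =>
    rw [hr] at h
    simp only [Option.bind_some] at h
    have hr0 : r = A.zero := A.cancel h.symm (A.add_zero e₁)
    rw [hr0] at hr
    have hp0 : p = A.zero := A.eq_zero_of_add_eq_zero hr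
    rw [hp0, A.add_zero] at hp
    exact Option.some_inj.mp hp
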